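/- arXiv:2109.11841 — 2 statements merged into one kernel-verified Lean document; each statement's English description precedes it below -/
import Mathlib

section
/- Let ∇_t = ∇ + E(t) be a smooth curve of Yang-Mills Hermitian connections with ∇ flat and E(0)=0, and write E(t) = tE₁ + t²E₂ + O(t³). Then ∇E₁ = 0, i.e., E₁ is a ∇-parallel 𝔲(F)-valued 1-form. -/
open scoped RealInnerProductSpace Topology

/-!
The Yang–Mills operator `x ↦ δ(∇x) + δ(x∧x) + x†(∇x) + x†(x∧x)` vanishes along the curve `E`, and
since `E 0 = 0` all its terms but `δ∇` are at least quadratic in `x`, so differentiating at `t = 0`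
gives `δ(∇E₁) = 0`. Pairing with `E₁` then gives `‖∇E₁‖² = ⟨⟨δ(∇E₁), E₁⟩⟩ = 0`.
-/

theorem eq_zero_of_adjoint_apply_eq_zero {𝕜 E F : Type*} [RCLike 𝕜]
    [NormedAddCommGroup E] [InnerProductSpace 𝕜 E] [NormedAddCommGroup F] [InnerProductSpace 𝕜 F]
    (T : E → F) (S : F → E) (hadj : ∀ x y, inner 𝕜 (T x) y = inner 𝕜 x (S y)) {x : E}
    (hx : S (T x) = 0) : T x = 0 :=
  inner_self_eq_zero.mp <| by rw [hadj, hx, inner_zero_right]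

theorem ContinuousLinearMap.hasDerivAt_of_bilinear_of_eq_zero {E F G : Type*}
    [NormedAddCommGroup E] [NormedSpace ℝ E] [NormedAddCommGroup F] [NormedSpace ℝ F]
    [NormedAddCommGroup G] [NormedSpace ℝ G] (B : E →L[ℝ] F →L[ℝ] G) {u : ℝ → E} {v : ℝ → F}
    {u' : E} {v' : F} {t : ℝ} (hu : HasDerivAt u u' t) (hv : HasDerivAt v v' t)
    (hu0 : u t = 0) (hv0 : v t = 0) : HasDerivAt (fun s ↦ B (u s) (v s)) 0 t := by
  simpa [hu0, hv0] using B.hasDerivAt_of_bilinear (fun _ ↦ hu) (fun _ ↦ hv)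

section YangMills

variable {V1 V2 : Type*} [NormedAddCommGroup V1] [NormedSpace ℝ V1]
  [NormedAddCommGroup V2] [NormedSpace ℝ V2]

/-- The Yang–Mills expression of the connection `∇ + x` (`∇` flat); `W` is the wedge product and
`dag x` is `x†`. -/
noncomputable def yangMillsOperator (nab : V1 →L[ℝ] V2) (δ : V2 →L[ℝ] V1)
    (W : V1 →L[ℝ] V1 →L[ℝ] V2) (dag : V1 →L[ℝ] V2 →L[ℝ] V1) (x : V1) : V1 :=
  δ (nab x) + δ (W x x) + dag x (nab x) + dag x (W x x)

theorem hasDerivAt_yangMillsOperator_comp (nab : V1 →L[ℝ] V2) (δ : V2 →L[ℝ] V1)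
    (W : V1 →L[ℝ] V1 →L[ℝ] V2) (dag : V1 →L[ℝ] V2 →L[ℝ] V1) {E : ℝ → V1} {E₁ : V1} {t : ℝ}
    (hE : HasDerivAt E E₁ t) (hEt : E t = 0) :
    HasDerivAt (fun s ↦ yangMillsOperator nab δ W dag (E s)) (δ (nab E₁)) t := by
  have hnab : HasDerivAt (fun s ↦ nab (E s)) (nab E₁) t := nab.hasFDerivAt.comp_hasDerivAt t hE
  have hW : HasDerivAt (fun s ↦ W (E s) (E s)) 0 t :=
    W.hasDerivAt_of_bilinear_of_eq_zero hE hE hEt hEt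
  have hWt : W (E t) (E t) = 0 := by simp [hEt]
  have hnabt : nab (E t) = 0 := by simp [hEt]
  have hδnab := δ.hasFDerivAt.comp_hasDerivAt t hnab
  have hδW := δ.hasFDerivAt.comp_hasDerivAt t hW
  have hdagnab := dag.hasDerivAt_of_bilinear_of_eq_zero hE hnab hEt hnabt
  have hdagW := dag.hasDerivAt_of_bilinear_of_eq_zero hE hW hEt hWt
  exact (((hδnab.add hδW).add hdagnab).add hdagW).congr_deriv (by simp)

end YangMills

theorem first_order_term_of_YangMills_curve_is_parallel_general
    (V1 V2 : Type)
    [NormedAddCommGroup V1] [InnerProductSpace ℝ V1]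
    [NormedAddCommGroup V2] [InnerProductSpace ℝ V2]
    (nab : V1 →L[ℝ] V2) (δ : V2 →L[ℝ] V1)
    (hadj : ∀ (x : V1) (y : V2), ⟪nab x, y⟫ = ⟪x, δ y⟫)
    (W : V1 →L[ℝ] V1 →L[ℝ] V2)
    (dag : V1 →L[ℝ] V2 →L[ℝ] V1)
    (E : ℝ → V1) (hE0 : E 0 = 0)
    (E₁ : V1)
    (hE₁ : Filter.Tendsto (fun t : ℝ => t⁻¹ • E t) (𝓝[≠] 0) (𝓝 E₁))
    (hYM : ∀ t : ℝ,
      δ (nab (E t)) + δ (W (E t) (E t)) + dag (E t) (nab (E t))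
        + dag (E t) (W (E t) (E t)) = 0) :
    nab E₁ = 0 := by
  have hE : HasDerivAt E E₁ 0 := by
    rw [hasDerivAt_iff_tendsto_slope]
    convert hE₁ using 2 with t
    simp [slope, hE0]
  have hcurve : (fun t ↦ yangMillsOperator nab δ W dag (E t)) = fun _ ↦ 0 := funext hYM
  have hlin : δ (nab E₁) = 0 := by
    have hderiv := hasDerivAt_yangMillsOperator_comp nab δ W dag hE hE0
    rw [hcurve] at hderiv
    exact hderiv.unique (hasDerivAt_const 0 0)
  exact eq_zero_of_adjoint_apply_eq_zero nab δ hadj hlin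

/-- along a curve `∇_t = ∇ + E(t)` of Yang–Mills Hermitian
connections with `∇` flat and `E(0) = 0`, writing
`E(t) = tE₁ + t²E₂ + O(t³)`, the first-order term satisfies `∇E₁ = 0`, i.e.
`E₁` is a `∇`-parallel `𝔲(F)`-valued 1-form.

Model: `V1 = A¹(𝔲(F))`, `V2 = A²(𝔲(F))` with `L²` inner products; `nab` is
the covariant derivative of the flat connection with formal adjoint `δ`
(`⟨∇x,y⟩ = ⟨x,δy⟩`); `W` is the wedge product and `dag x` the adjoint
wedge–bracket operator `x†`.  The Yang–Mills condition at each `t` is the one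
of Theorem `Th:YMHat`: `δ(∇E_t) + δ(E_t∧E_t) + E_t†(∇E_t) + E_t†(E_t∧E_t) = 0`.
The coefficients are `E₁ = lim_{t→0} E(t)/t` and
`E₂ = lim_{t→0} (E(t) − tE₁)/t²`. -/
theorem first_order_term_of_YangMills_curve_is_parallel
    (V1 V2 : Type)
    [NormedAddCommGroup V1] [InnerProductSpace ℝ V1]
    [NormedAddCommGroup V2] [InnerProductSpace ℝ V2]
    (nab : V1 →L[ℝ] V2) (δ : V2 →L[ℝ] V1)
    (hadj : ∀ (x : V1) (y : V2), ⟪nab x, y⟫ = ⟪x, δ y⟫)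
    (W : V1 →L[ℝ] V1 →L[ℝ] V2)
    (dag : V1 →L[ℝ] V2 →L[ℝ] V1)
    (E : ℝ → V1) (hE0 : E 0 = 0)
    (E₁ E₂ : V1)
    (hE₁ : Filter.Tendsto (fun t : ℝ => t⁻¹ • E t) (𝓝[≠] 0) (𝓝 E₁))
    (hE₂ : Filter.Tendsto (fun t : ℝ => (t ^ 2)⁻¹ • (E t - t • E₁))
      (𝓝[≠] 0) (𝓝 E₂))
    (hYM : ∀ t : ℝ,
      δ (nab (E t)) + δ (W (E t) (E t)) + dag (E t) (nab (E t))
        + dag (E t) (W (E t) (E t)) = 0) :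
    nab E₁ = 0 :=
  first_order_term_of_YangMills_curve_is_parallel_general V1 V2 nab δ hadj W dag E hE0 E₁ hE₁ hYM
end

section
/- A holomorphic vector bundle F over a complex manifold X admits a holomorphic connection if and only if the short exact sequence 0 → Ω¹(F) → J¹(F) → F → 0 of the first jet bundle splits as a sequence of 𝒪-modules; equivalently, iff the Atiyah class a(F) ∈ Ext¹(F, Ω¹⊗F) vanishes. -/
open TensorProduct

/-!
A connection `∇` and a splitting `s` of `π` determine each other through `∇ = i⁻¹ ∘ (j¹ - s)`:
`j¹` and `i ∘ ∇` obey the same Leibniz rule, so their difference is `𝒪`-linear; conversely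
`j¹ - s` takes values in `ker π = range i`, and pulling it back along the injective `i` gives an
additive map that inherits the Leibniz rule of `j¹`.
-/

section Leibniz

variable {A M N : Type*} [CommRing A] [AddCommGroup M] [Module A M] [AddCommGroup N] [Module A N]

@[simps]
def AddMonoidHom.subLinearMapOfLeibniz (φ ψ : M →+ N) (δ : A → M → N)
    (hφ : ∀ (f : A) (x : M), φ (f • x) = δ f x + f • φ x)
    (hψ : ∀ (f : A) (x : M), ψ (f • x) = δ f x + f • ψ x) : M →ₗ[A] N where
  toFun x := φ x - ψ x
  map_add' x y := by
    simp only [map_add]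
    abel
  map_smul' f x := by
    simp only [hφ, hψ, RingHom.id_apply, smul_sub]
    abel

end Leibniz

theorem AddMonoidHom.exists_comp_eq_of_range_subset {M N P : Type*} [AddCommGroup M]
    [AddCommGroup N] [AddCommGroup P] {i : P →+ N} (hi : Function.Injective i) (g : M →+ N)
    (hg : Set.range g ⊆ Set.range i) : ∃ h : M →+ P, ∀ x, i (h x) = g x := by
  choose h hh using fun x => hg ⟨x, rfl⟩
  exact ⟨AddMonoidHom.mk' h fun x y => hi (by simp only [map_add, hh]), hh⟩

theorem holomorphic_connection_iff_jet_sequence_splits_general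
    (A Ω F J : Type) [CommRing A] [AddCommGroup Ω] [Module A Ω]
    [AddCommGroup F] [Module A F] [AddCommGroup J] [Module A J]
    (d : A → Ω)
    (i : TensorProduct A Ω F →ₗ[A] J) (π : J →ₗ[A] F)
    (hi : Function.Injective i)
    (hexact : ∀ x : J, π x = 0 ↔ x ∈ Set.range i)
    (j1 : F →+ J)
    (hπj1 : ∀ σ : F, π (j1 σ) = σ)
    (hj1 : ∀ (f : A) (σ : F), j1 (f • σ) = i (d f ⊗ₜ[A] σ) + f • j1 σ) :
    (∃ D : F →+ TensorProduct A Ω F,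
        ∀ (f : A) (σ : F), D (f • σ) = d f ⊗ₜ[A] σ + f • D σ) ↔
      (∃ s : F →ₗ[A] J, ∀ σ : F, π (s σ) = σ) := by
  have hexact : Function.Exact i π := hexact
  constructor
  · rintro ⟨D, hD⟩
    let iD := i.toAddMonoidHom.comp D
    have hiD : ∀ (f : A) (σ : F), iD (f • σ) = i (d f ⊗ₜ[A] σ) + f • iD σ := by
      simp [iD, hD]
    refine ⟨j1.subLinearMapOfLeibniz iD _ hj1 hiD, fun σ => ?_⟩
    simp [iD, hπj1, hexact.apply_apply_eq_zero]
  · rintro ⟨s, hs⟩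
    have hker : Set.range (j1 - s.toAddMonoidHom) ⊆ Set.range i := by
      rintro _ ⟨σ, rfl⟩
      exact (hexact _).1 (by simp [hπj1, hs])
    obtain ⟨D, hD⟩ := i.toAddMonoidHom.exists_comp_eq_of_range_subset hi _ hker
    refine ⟨D, fun f σ => hi ?_⟩
    simp only [LinearMap.toAddMonoidHom_coe] at hD
    simp only [hD, map_add, map_smul, AddMonoidHom.sub_apply, LinearMap.toAddMonoidHom_coe, hj1,
      smul_sub]
    abel

/-- a holomorphic vector bundle `F` admits a holomorphic
connection iff the first-jet short exact sequence
`0 → Ω¹(F) → J¹(F) → F → 0` splits as a sequence of `𝒪`-modules — which is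
exactly the vanishing of the Atiyah class `a(F) ∈ Ext¹(F, Ω¹⊗F)`, since
`a(F)` is by definition the class of this extension.

Model: `A = 𝒪` (functions), `Ω` the 1-forms with differential `d`, `F` the
sections of the bundle, `J = J¹(F)`, with `A`-linear maps
`i : Ω ⊗ F → J`, `π : J → F` forming a short exact sequence, and the
ℂ-linear (additive) jet prolongation `j¹ : F → J` satisfying `π ∘ j¹ = id`
and `j¹(fσ) = i(df ⊗ σ) + f • j¹σ`.  Then `F` has a holomorphic connection
(an additive `∇ : F → Ω¹ ⊗ F` with `∇(fσ) = df ⊗ σ + f∇σ`) iff `π` has an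
`A`-linear right inverse, i.e. the sequence splits. -/
theorem holomorphic_connection_iff_jet_sequence_splits
    (A Ω F J : Type) [CommRing A] [AddCommGroup Ω] [Module A Ω]
    [AddCommGroup F] [Module A F] [AddCommGroup J] [Module A J]
    (d : A → Ω)
    (i : TensorProduct A Ω F →ₗ[A] J) (π : J →ₗ[A] F)
    (hi : Function.Injective i)
    (hexact : ∀ x : J, π x = 0 ↔ x ∈ Set.range i)
    (hsurj : Function.Surjective π)
    (j1 : F →+ J)
    (hπj1 : ∀ σ : F, π (j1 σ) = σ)
    (hj1 : ∀ (f : A) (σ : F), j1 (f • σ) = i (d f ⊗ₜ[A] σ) + f • j1 σ) :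
    (∃ D : F →+ TensorProduct A Ω F,
        ∀ (f : A) (σ : F), D (f • σ) = d f ⊗ₜ[A] σ + f • D σ) ↔
      (∃ s : F →ₗ[A] J, ∀ σ : F, π (s σ) = σ) :=
  holomorphic_connection_iff_jet_sequence_splits_general A Ω F J d i π hi hexact j1 hπj1 hj1
end
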